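/- (Key step in the proof of Theorem 3.1: the Picard iterates remain in the closed ball.) Let Z be a nonempty set, G a multiplicative G_M-metric on Z, F : Z → Z, x₀ ∈ Z, η ∈ [0,1) and γ > 0. Assume G(Fx, Fy, Fz) ≤ G(x,y,z)^η for all x, y, z in the closed ball B̄(x₀, γ), and G(x₀, Fx₀, Fx₀) ≤ γ^{1−η}. Let x_j = F^j x₀ be the Picard iterates. Then for every j ≥ 0 one has x_j ∈ B̄(x₀, γ) and G(x_j, x_{j+1}, x_{j+1}) ≤ G(x₀, x₁, x₁)^{η^j}. -/

import Mathlib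

structure IsMultGMetric {Z : Type*} (G : Z → Z → Z → ℝ) : Prop where
  pos : ∀ x y z, 0 < G x y z
  eq_one : ∀ x y z, x = y → y = z → G x y z = 1
  one_lt : ∀ x y, x ≠ y → 1 < G x x y
  le_of_ne : ∀ x y z, y ≠ z → G x x y ≤ G x y z
  perm : ∀ x y z, G x y z = G y z x
  swap : ∀ x y z, G x y z = G x z y
  rect : ∀ x y z t, G x y z ≤ G x t t * G t y z

def GMBall {Z : Type*} (G : Z → Z → Z → ℝ) (x₀ : Z) (γ : ℝ) : Set Z :=
  {ρ | G x₀ ρ ρ ≤ γ}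

/-! Writing `d = G(x₀, x₁, x₁) ≥ 1`, the contraction gives `G(x_j, x_{j+1}, x_{j+1}) ≤ d ^ η ^ j`
as long as the iterates stay in the ball. The rectangular inequality along the chain
`x₀, x₁, …, x_n` then bounds `G(x₀, x_n, x_n)` by `d ^ (1 + η + ⋯ + η ^ (n-1)) ≤ d ^ (1 - η)⁻¹`,
which is at most `γ` exactly because `d ≤ γ ^ (1 - η)`. A strong induction on `j` interleaves
the two bounds. -/

open Finset

theorem Real.prod_rpow_geom_le_rpow_inv_one_sub {d η : ℝ} (hd : 1 ≤ d) (hη0 : 0 ≤ η)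
    (hη1 : η < 1) (n : ℕ) : ∏ i ∈ range n, d ^ η ^ i ≤ d ^ (1 - η)⁻¹ := by
  rw [← Real.rpow_sum_of_pos (by linarith)]
  refine Real.rpow_le_rpow_of_exponent_le hd ?_
  have hgeom := geom_sum_Ico_le_of_lt_one (m := 0) (n := n) hη0 hη1
  rwa [← range_eq_Ico, pow_zero, one_div] at hgeom

namespace IsMultGMetric

variable {Z : Type*} {G : Z → Z → Z → ℝ}

theorem one_le (hG : IsMultGMetric G) (x y : Z) : 1 ≤ G x y y := by
  rcases eq_or_ne x y with rfl | hxy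
  · exact (hG.eq_one x x x rfl rfl).ge
  · have hsq : G x x y ≤ G x y y * G x y y := by
      simpa only [← hG.perm y x y] using hG.rect x x y y
    nlinarith [hG.one_lt x y hxy, hG.pos x y y]

theorem le_prod_range (hG : IsMultGMetric G) (x : ℕ → Z) (n : ℕ) :
    G (x 0) (x n) (x n) ≤ ∏ i ∈ range n, G (x i) (x (i + 1)) (x (i + 1)) := by
  induction n with
  | zero => simp [hG.eq_one]
  | succ n ih =>
    calc G (x 0) (x (n + 1)) (x (n + 1))
        ≤ G (x 0) (x n) (x n) * G (x n) (x (n + 1)) (x (n + 1)) := hG.rect _ _ _ _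
      _ ≤ _ := by
        rw [prod_range_succ]
        exact mul_le_mul_of_nonneg_right ih (hG.pos _ _ _).le

theorem mem_gmBall_of_step_le (hG : IsMultGMetric G) {x : ℕ → Z} {d η γ : ℝ} (hd : 1 ≤ d)
    (hη0 : 0 ≤ η) (hη1 : η < 1) (hγ : 0 ≤ γ) (hdγ : d ≤ γ ^ (1 - η)) {n : ℕ}
    (hstep : ∀ i < n, G (x i) (x (i + 1)) (x (i + 1)) ≤ d ^ η ^ i) :
    x n ∈ GMBall G (x 0) γ :=
  calc G (x 0) (x n) (x n)
      ≤ ∏ i ∈ range n, G (x i) (x (i + 1)) (x (i + 1)) := hG.le_prod_range x n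
    _ ≤ ∏ i ∈ range n, d ^ η ^ i :=
        prod_le_prod (fun _ _ ↦ (hG.pos _ _ _).le) fun i hi ↦ hstep i (mem_range.1 hi)
    _ ≤ d ^ (1 - η)⁻¹ := Real.prod_rpow_geom_le_rpow_inv_one_sub hd hη0 hη1 n
    _ ≤ γ := (Real.rpow_inv_le_iff_of_pos (by linarith) hγ (by linarith)).2 hdγ

end IsMultGMetric

theorem picard_iterates_in_ball_general {Z : Type*}
    (G : Z → Z → Z → ℝ) (hG : IsMultGMetric G)
    (F : Z → Z) (x₀ : Z) (η γ : ℝ)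
    (hη0 : 0 ≤ η) (hη1 : η < 1) (hγ : 0 < γ)
    (hcontr : ∀ x ∈ GMBall G x₀ γ, ∀ y ∈ GMBall G x₀ γ, ∀ z ∈ GMBall G x₀ γ,
      G (F x) (F y) (F z) ≤ (G x y z) ^ η)
    (hstart : G x₀ (F x₀) (F x₀) ≤ γ ^ (1 - η)) :
    ∀ j : ℕ, F^[j] x₀ ∈ GMBall G x₀ γ ∧
      G (F^[j] x₀) (F^[j + 1] x₀) (F^[j + 1] x₀) ≤
        (G x₀ (F x₀) (F x₀)) ^ (η ^ j) := by
  set d := G x₀ (F x₀) (F x₀)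
  have hd : 1 ≤ d := hG.one_le x₀ (F x₀)
  have hmem : ∀ n, (∀ i < n, G (F^[i] x₀) (F^[i + 1] x₀) (F^[i + 1] x₀) ≤ d ^ η ^ i) →
      F^[n] x₀ ∈ GMBall G x₀ γ := fun n ↦
    hG.mem_gmBall_of_step_le (x := fun j ↦ F^[j] x₀) hd hη0 hη1 hγ.le hstart
  have hstep : ∀ j, G (F^[j] x₀) (F^[j + 1] x₀) (F^[j + 1] x₀) ≤ d ^ η ^ j := by
    intro j
    induction j using Nat.strong_induction_on with
    | _ j ih =>
      rcases j with _ | j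
      · simp [d]
      have hj := hmem j fun i hi ↦ ih i (by omega)
      have hj1 := hmem (j + 1) ih
      calc G (F^[j + 1] x₀) (F^[j + 2] x₀) (F^[j + 2] x₀)
          ≤ G (F^[j] x₀) (F^[j + 1] x₀) (F^[j + 1] x₀) ^ η := by
            simpa only [← Function.iterate_succ_apply' F] using hcontr _ hj _ hj1 _ hj1
        _ ≤ (d ^ η ^ j) ^ η := Real.rpow_le_rpow (hG.pos _ _ _).le (ih j (by omega)) hη0
        _ = d ^ η ^ (j + 1) := by rw [← Real.rpow_mul (by linarith), pow_succ]
  exact fun j ↦ ⟨hmem j fun i _ ↦ hstep i, hstep j⟩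

theorem picard_iterates_in_ball {Z : Type*} [Nonempty Z]
    (G : Z → Z → Z → ℝ) (hG : IsMultGMetric G)
    (F : Z → Z) (x₀ : Z) (η γ : ℝ)
    (hη0 : 0 ≤ η) (hη1 : η < 1) (hγ : 0 < γ)
    (hcontr : ∀ x ∈ GMBall G x₀ γ, ∀ y ∈ GMBall G x₀ γ, ∀ z ∈ GMBall G x₀ γ,
      G (F x) (F y) (F z) ≤ (G x y z) ^ η)
    (hstart : G x₀ (F x₀) (F x₀) ≤ γ ^ (1 - η)) :
    ∀ j : ℕ, F^[j] x₀ ∈ GMBall G x₀ γ ∧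
      G (F^[j] x₀) (F^[j + 1] x₀) (F^[j + 1] x₀) ≤
        (G x₀ (F x₀) (F x₀)) ^ (η ^ j) :=
  picard_iterates_in_ball_general G hG F x₀ η γ hη0 hη1 hγ hcontr hstart
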